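/- There is no nonzero Jordan homomorphism Φ : ℓ∞(ℕ, B(H)) → B(H) which vanishes on the set of all cofinite sequences. -/

import Mathlib

/-!
A Jordan homomorphism `Φ` maps idempotents to idempotents, and idempotents `p`, `q` with
`Φ (p * q) = Φ (q * p) = 0` to orthogonal ones; as `H` is separable, `B(H)` contains no
uncountable family of nonzero pairwise orthogonal idempotents. Index a Hilbert basis of `H` by the
vertices of the infinite binary tree (lists of booleans); there are uncountably many branches,
any two of which share only finitely many vertices. For a partial isometry `v` with `v * v = 0`
and adjoint `w` one has `v * w = (v + w) * (w * v) * (v + w)`, so `Φ` kills `v * w` as soon as it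
kills `w * v`; hence `Φ` kills either all or none of the sequences of rank-one basis projections.

If it kills none, the sequences whose `m`-th term projects onto the `m`-th vertex of a branch
form the forbidden family: the product of two of them is cofinite. If it kills all of them, it
kills every constant sequence of finite-rank diagonal projections, and the constant sequences
projecting onto the span of a branch form the forbidden family: such a projection is equivalent
to its complement, so `Φ` cannot kill it without killing `1`, and `Φ 1 ≠ 0` as `Φ ≠ 0`.
-/

open scoped ENNReal

section JordanMap

theorem IsIdempotentElem.map_of_map_mul_self {A B F : Type*} [Mul A] [Mul B] [FunLike F A B]
    {Φ : F} (hΦ : ∀ x, Φ (x * x) = Φ x * Φ x) {p : A} (hp : IsIdempotentElem p) :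
    IsIdempotentElem (Φ p) := by
  rw [IsIdempotentElem, ← hΦ, hp.eq]

variable {A B F : Type*} [NonUnitalRing A] [NonUnitalRing B] [FunLike F A B]
  [AddMonoidHomClass F A B] {Φ : F}

theorem map_mul_add_mul_of_map_mul_self (hΦ : ∀ x, Φ (x * x) = Φ x * Φ x) (x y : A) :
    Φ (x * y + y * x) = Φ x * Φ y + Φ y * Φ x := by
  have h := hΦ (x + y)
  simp only [add_mul, mul_add, map_add, hΦ] at h
  rw [map_add, ← sub_eq_zero, ← sub_eq_zero.mpr h]
  abel

theorem map_mul_mul_of_map_mul_self [IsAddTorsionFree B] (hΦ : ∀ x, Φ (x * x) = Φ x * Φ x)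
    (x y : A) : Φ (x * y * x) = Φ x * Φ y * Φ x := by
  have key : x * (x * y + y * x) + (x * y + y * x) * x
      = (x * x * y + y * (x * x)) + 2 • (x * y * x) := by noncomm_ring
  have h := map_mul_add_mul_of_map_mul_self hΦ x (x * y + y * x)
  rw [key, map_add, map_nsmul, map_mul_add_mul_of_map_mul_self hΦ, hΦ,
    map_mul_add_mul_of_map_mul_self hΦ] at h
  refine nsmul_right_injective two_ne_zero ?_
  rw [← sub_eq_zero, ← sub_eq_zero.mpr h]
  noncomm_ring

theorem map_mul_eq_zero_of_partialIso [IsAddTorsionFree B] (hΦ : ∀ x, Φ (x * x) = Φ x * Φ x)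
    {v w : A} (hvwv : v * w * v = v) (hv : v * v = 0) (hw : w * w = 0)
    (h : Φ (w * v) = 0) : Φ (v * w) = 0 := by
  have : (v + w) * (w * v) * (v + w) = v * w := by
    simp only [add_mul, mul_add, ← mul_assoc, hvwv, hw, hv, add_zero, zero_add]
  rw [← this, map_mul_mul_of_map_mul_self hΦ, h, mul_zero, zero_mul]

theorem map_mul_map_eq_zero_of_map_mul_eq_zero [IsAddTorsionFree B]
    (hΦ : ∀ x, Φ (x * x) = Φ x * Φ x) {p q : A} (hp : IsIdempotentElem p)
    (hpq : Φ (p * q) = 0) (hqp : Φ (q * p) = 0) : Φ p * Φ q = 0 :=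
  (hp.map_of_map_mul_self hΦ).mul_eq_zero_of_anticommute <| by
    rw [← map_mul_add_mul_of_map_mul_self hΦ, map_add, hpq, hqp, add_zero]

end JordanMap

theorem map_eq_zero_of_map_one_eq_zero {A B F : Type*} [Ring A] [NonUnitalRing B]
    [IsAddTorsionFree B] [FunLike F A B] [AddMonoidHomClass F A B] {Φ : F}
    (hΦ : ∀ x, Φ (x * x) = Φ x * Φ x) (h1 : Φ 1 = 0) (x : A) : Φ x = 0 := by
  simpa [h1] using map_mul_mul_of_map_mul_self hΦ 1 x

theorem countable_of_isIdempotentElem_of_pairwise_mul_eq_zero {𝕜 E ι : Type*}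
    [NontriviallyNormedField 𝕜] [NormedAddCommGroup E] [NormedSpace 𝕜 E]
    [TopologicalSpace.SeparableSpace E] (q : ι → E →L[𝕜] E) (hq : ∀ i, IsIdempotentElem (q i))
    (hq0 : ∀ i, q i ≠ 0) (horth : Pairwise fun i j ↦ q i * q j = 0) : Countable ι := by
  have hv : ∀ i, ∃ v, q i v ≠ 0 := fun i ↦ by
    by_contra! h
    exact hq0 i (ContinuousLinearMap.ext h)
  choose v hv using hv
  set ξ := fun i ↦ q i (v i)
  have hfix : ∀ i, q i (ξ i) = ξ i := fun i ↦ by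
    simp only [ξ, ← mul_apply_eq_comp, (hq i).eq]
  have hkill : ∀ i j, i ≠ j → q i (ξ j) = 0 := fun i j hij ↦ by
    simp only [ξ, ← mul_apply_eq_comp, horth hij, zero_apply]
  set ρ := fun i ↦ ‖ξ i‖ / ‖q i‖
  have hρ : ∀ i, 0 < ρ i := fun i ↦ div_pos (norm_pos_iff.2 (hv i)) (norm_pos_iff.2 (hq0 i))
  have hsep : ∀ i j, i ≠ j → ρ i ≤ dist (ξ i) (ξ j) := fun i j hij ↦ by
    rw [div_le_iff₀' (norm_pos_iff.2 (hq0 i)), dist_eq_norm]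
    simpa [hfix, hkill i j hij] using (q i).le_opNorm (ξ i - ξ j)
  refine Pairwise.countable_of_isOpen_disjoint (s := fun i ↦ Metric.ball (ξ i) (ρ i / 2))
    (fun i j hij ↦ Metric.ball_disjoint_ball ?_) (fun _ ↦ Metric.isOpen_ball)
    (fun i ↦ Metric.nonempty_ball.2 (half_pos (hρ i)))
  rcases le_total (ρ i) (ρ j) with h | h
  · linarith [hsep j i hij.symm, dist_comm (ξ i) (ξ j)]
  · linarith [hsep i j hij]

theorem countable_of_map_isIdempotentElem {𝕜 K A F X : Type*} [NontriviallyNormedField 𝕜]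
    [CharZero 𝕜] [NormedAddCommGroup K] [NormedSpace 𝕜 K] [TopologicalSpace.SeparableSpace K]
    [NonUnitalRing A] [FunLike F A (K →L[𝕜] K)] [AddMonoidHomClass F A (K →L[𝕜] K)] {Φ : F}
    (hΦ : ∀ x, Φ (x * x) = Φ x * Φ x) (p : X → A) (hp : ∀ x, IsIdempotentElem (p x))
    (hp0 : ∀ x, Φ (p x) ≠ 0) (horth : Pairwise fun x y ↦ Φ (p x * p y) = 0) : Countable X :=
  have : IsAddTorsionFree (K →L[𝕜] K) := .of_isTorsionFree 𝕜 _
  countable_of_isIdempotentElem_of_pairwise_mul_eq_zero (fun x ↦ Φ (p x))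
    (fun x ↦ (hp x).map_of_map_mul_self hΦ) hp0
    fun _ _ hxy ↦ map_mul_map_eq_zero_of_map_mul_eq_zero hΦ (hp _) (horth hxy) (horth hxy.symm)

theorem Orthonormal.countable {𝕜 E ι : Type*} [RCLike 𝕜] [NormedAddCommGroup E]
    [InnerProductSpace 𝕜 E] [TopologicalSpace.SeparableSpace E] {v : ι → E}
    (hv : Orthonormal 𝕜 v) : Countable ι := by
  refine Pairwise.countable_of_isOpen_disjoint (s := fun i ↦ Metric.ball (v i) 2⁻¹)
    (fun i j hij ↦ Metric.ball_disjoint_ball ?_) (fun _ ↦ Metric.isOpen_ball)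
    (fun _ ↦ Metric.nonempty_ball.mpr (by norm_num))
  have h : ‖v i - v j‖ ^ 2 = 2 := by
    rw [@norm_sub_sq 𝕜, hv.norm_eq_one, hv.norm_eq_one, hv.inner_eq_zero hij]
    norm_num
  rw [dist_eq_norm]
  nlinarith [norm_nonneg (v i - v j)]

theorem exists_hilbertBasis_of_countable_of_infinite {𝕜 E : Type*} [RCLike 𝕜]
    [NormedAddCommGroup E] [InnerProductSpace 𝕜 E] [CompleteSpace E]
    [TopologicalSpace.SeparableSpace E] (hE : ¬ FiniteDimensional 𝕜 E)
    (ι : Type*) [Countable ι] [Infinite ι] : Nonempty (HilbertBasis ι 𝕜 E) := by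
  obtain ⟨w, b, -⟩ := exists_hilbertBasis 𝕜 E
  have : Countable w := b.orthonormal.countable
  have : Infinite w := by
    by_contra hw
    have : Fintype w := @Fintype.ofFinite _ (not_infinite_iff_finite.mp hw)
    exact hE (b.toOrthonormalBasis.toBasis.finiteDimensional_of_finite)
  obtain ⟨e⟩ := nonempty_equiv_of_countable (α := ι) (β := w)
  refine ⟨HilbertBasis.mk (b.orthonormal.comp e e.injective) ?_⟩
  rw [EquivLike.range_comp, b.dense_span]

def prefixList (x : ℕ → Bool) (m : ℕ) : List Bool := List.ofFn fun i : Fin m ↦ x i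

theorem prefixList_injective (x : ℕ → Bool) : Function.Injective (prefixList x) :=
  fun m n h ↦ by simpa [prefixList] using congrArg List.length h

theorem finite_setOf_prefixList_eq {x y : ℕ → Bool} (hxy : x ≠ y) :
    {m | prefixList x m = prefixList y m}.Finite := by
  obtain ⟨n, hn⟩ := Function.ne_iff.1 hxy
  refine (Set.finite_Iic n).subset fun m hm ↦ ?_
  by_contra hnm
  exact hn (congrFun (List.ofFn_injective hm) ⟨n, not_le.1 hnm⟩)

def branch (x : ℕ → Bool) : Set (List Bool) := Set.range (prefixList x)

theorem infinite_branch (x : ℕ → Bool) : (branch x).Infinite :=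
  Set.infinite_range_of_injective (prefixList_injective x)

theorem finite_branch_inter {x y : ℕ → Bool} (hxy : x ≠ y) : (branch x ∩ branch y).Finite := by
  refine ((finite_setOf_prefixList_eq hxy).image (prefixList x)).subset ?_
  rintro _ ⟨⟨m, rfl⟩, ⟨n, hn⟩⟩
  obtain rfl : n = m := by simpa [prefixList] using congrArg List.length hn
  exact ⟨n, hn.symm, rfl⟩

theorem infinite_compl_branch (x : ℕ → Bool) : (branch x)ᶜ.Infinite := by
  have hne : (fun n ↦ !x n) ≠ x := fun h ↦ by simpa using congrFun h 0
  refine ((infinite_branch fun n ↦ !x n).sdiff (finite_branch_inter hne)).mono fun l hl hlx ↦ ?_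
  exact hl.2 ⟨hl.1, hlx⟩

theorem not_countable_nat_to_bool : ¬ Countable (ℕ → Bool) := by
  rw [← Cardinal.mk_le_aleph0_iff, not_le]
  simpa using Cardinal.cantor Cardinal.aleph0

namespace PEquiv

variable {α : Type*}

theorem trans_symm_trans (f : α ≃. α) : (f.trans f.symm).trans f = f := by
  ext a b
  simp only [← Option.mem_def, mem_trans]
  constructor
  · rintro ⟨c, ⟨d, hd, hc⟩, hb⟩
    rw [mem_iff_mem] at hc
    rwa [← f.inj hd hc] at hb
  · exact fun h ↦ ⟨a, ⟨b, h, (mem_iff_mem f).2 h⟩, h⟩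

theorem ofSet_trans_ofSet (s t : Set α) [DecidablePred (· ∈ s)] [DecidablePred (· ∈ t)]
    [DecidablePred (· ∈ s ∩ t)] : (ofSet s).trans (ofSet t) = ofSet (s ∩ t) := by
  ext a b
  simp only [← Option.mem_def, mem_trans, mem_ofSet_iff, Set.mem_inter_iff]
  aesop

theorem ofSet_trans_ofSet_self (s : Set α) [DecidablePred (· ∈ s)] :
    (ofSet s).trans (ofSet s) = ofSet s := by
  ext a b
  simp only [← Option.mem_def, mem_trans, mem_ofSet_iff]
  aesop

theorem single_self_eq_ofSet [DecidableEq α] (a : α) [DecidablePred (· ∈ ({a} : Set α))] :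
    single a a = ofSet {a} := by
  ext b c
  simp only [← Option.mem_def, mem_single_iff, mem_ofSet_iff, Set.mem_singleton_iff]
  aesop

def ofSubtypeEquiv {s t : Set α} [DecidablePred (· ∈ s)] [DecidablePred (· ∈ t)] (e : s ≃ t) :
    α ≃. α where
  toFun a := if h : a ∈ s then some (e ⟨a, h⟩) else none
  invFun b := if h : b ∈ t then some (e.symm ⟨b, h⟩) else none
  inv a b := by
    constructor <;> intro h <;> split_ifs at h <;> simp only [Option.some.injEq] at h <;> subst h <;>
      simp

variable {s t : Set α} [DecidablePred (· ∈ s)] [DecidablePred (· ∈ t)] (e : s ≃ t)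

theorem ofSubtypeEquiv_apply (a : α) :
    ofSubtypeEquiv e a = if h : a ∈ s then some ↑(e ⟨a, h⟩) else none := rfl

theorem ofSubtypeEquiv_trans_symm :
    (ofSubtypeEquiv e).trans (ofSubtypeEquiv e).symm = ofSet s := by
  rw [self_trans_symm]
  congr 1
  ext a
  by_cases ha : a ∈ s <;> simp [ofSubtypeEquiv_apply, ha]

theorem symm_trans_ofSubtypeEquiv :
    (ofSubtypeEquiv e).symm.trans (ofSubtypeEquiv e) = ofSet t :=
  ofSubtypeEquiv_trans_symm e.symm

theorem ofSubtypeEquiv_trans_self (h : Disjoint s t) :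
    (ofSubtypeEquiv e).trans (ofSubtypeEquiv e) = ⊥ := by
  ext a b
  by_cases ha : a ∈ s <;> simp [trans_eq_some, ofSubtypeEquiv_apply, ha]
  exact fun hs ↦ absurd hs (h.notMem_of_mem_right (e ⟨a, ha⟩).2)

variable {ι : Type*} (σ : ι ≃. ι)

theorem summable_elim_and_tsum_elim_le {g : ι → ℝ} (hg : Summable g) (hg0 : 0 ≤ g) :
    Summable (fun i ↦ (σ i).elim 0 g) ∧ ∑' i, (σ i).elim 0 g ≤ ∑' i, g i := by
  set D := {i // (σ i).isSome}
  let τ : D → ι := fun i ↦ (σ i).get i.2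
  have hτ : Function.Injective τ := fun i j hij ↦
    Subtype.ext <| σ.inj (Option.get_mem i.2) (hij.symm ▸ Option.get_mem j.2 : τ i ∈ σ j)
  have hcomp : (fun i ↦ (σ i).elim 0 g) ∘ Subtype.val = g ∘ τ := by
    ext ⟨i, hi⟩
    obtain ⟨j, hj⟩ := Option.isSome_iff_exists.1 hi
    simp [τ, hj]
  have hzero : ∀ i ∉ Set.range (Subtype.val : D → ι), (σ i).elim 0 g = 0 := fun i hi ↦ by
    rw [Option.not_isSome_iff_eq_none.1 fun h ↦ hi ⟨⟨i, h⟩, rfl⟩, Option.elim_none]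
  constructor
  · rw [← Subtype.val_injective.summable_iff hzero, hcomp]
    exact hg.comp_injective hτ
  · rw [← Subtype.val_injective.tsum_eq (Function.support_subset_iff'.2 hzero)]
    exact (congrArg tsum hcomp).le.trans (tsum_comp_le_tsum_of_inj hg hg0 hτ)

variable {𝕜 E : Type*} [NontriviallyNormedField 𝕜] [NormedAddCommGroup E] [NormedSpace 𝕜 E]

theorem norm_elim_rpow (f : ι → E) {r : ℝ} (hr : 0 < r) :
    (fun i ↦ ‖(σ i).elim 0 f‖ ^ r) = fun i ↦ (σ i).elim 0 fun j ↦ ‖f j‖ ^ r := by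
  ext i
  cases σ i <;> simp [Real.zero_rpow hr.ne']

theorem memℓp_elim (f : lp (fun _ : ι ↦ E) 2) : Memℓp (fun i ↦ (σ i).elim 0 f) 2 := by
  have hp : 0 < (2 : ℝ≥0∞).toReal := by norm_num
  rw [memℓp_gen_iff hp, norm_elim_rpow σ f hp]
  exact (σ.summable_elim_and_tsum_elim_le ((memℓp_gen_iff hp).1 (lp.memℓp f))
    fun _ ↦ by positivity).1

variable (𝕜 E) in
/-- The operator `f ↦ f ∘ σ` on `ℓ²`, where `f ∘ σ` vanishes outside the domain of `σ`. -/
noncomputable def lpPullback : lp (fun _ : ι ↦ E) 2 →L[𝕜] lp (fun _ : ι ↦ E) 2 :=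
  LinearMap.mkContinuous
    { toFun f := ⟨fun i ↦ (σ i).elim 0 f, σ.memℓp_elim f⟩
      map_add' f g := by
        ext i
        change (σ i).elim 0 ⇑(f + g) = (σ i).elim 0 f + (σ i).elim 0 g
        cases σ i <;> simp [Option.elim]
      map_smul' c f := by ext i; cases h : σ i <;> simp [h] }
    1 fun f ↦ by
      have hp : 0 < (2 : ℝ≥0∞).toReal := by norm_num
      rw [one_mul]
      refine lp.norm_le_of_tsum_le hp (norm_nonneg f) ?_
      rw [lp.norm_rpow_eq_tsum hp]
      have := (σ.summable_elim_and_tsum_elim_le ((memℓp_gen_iff hp).1 (lp.memℓp f))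
        fun _ ↦ by positivity).2
      exact (congrArg tsum (norm_elim_rpow σ f hp)).le.trans this

theorem norm_lpPullback_le : ‖σ.lpPullback 𝕜 E‖ ≤ 1 :=
  LinearMap.mkContinuous_norm_le _ zero_le_one _

theorem lpPullback_trans (τ : ι ≃. ι) :
    (σ.trans τ).lpPullback 𝕜 E = σ.lpPullback 𝕜 E * τ.lpPullback 𝕜 E := by
  ext f i
  change ((σ i).bind τ).elim 0 f = (σ i).elim 0 (τ.lpPullback 𝕜 E f)
  cases σ i <;> rfl

theorem lpPullback_refl : (PEquiv.refl ι).lpPullback 𝕜 E = 1 := rfl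

theorem lpPullback_bot : (⊥ : ι ≃. ι).lpPullback 𝕜 E = 0 := rfl

theorem lpPullback_ofSet_add_of_disjoint {s t : Set ι} [DecidablePred (· ∈ s)]
    [DecidablePred (· ∈ t)] [DecidablePred (· ∈ s ∪ t)] (hst : Disjoint s t) :
    (ofSet s).lpPullback 𝕜 E + (ofSet t).lpPullback 𝕜 E = (ofSet (s ∪ t)).lpPullback 𝕜 E := by
  ext f i
  change (ofSet s i).elim 0 f + (ofSet t i).elim 0 f = (ofSet (s ∪ t) i).elim 0 f
  by_cases hs : i ∈ s
  · simp [ofSet, hs, hst.notMem_of_mem_left hs]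
  · by_cases ht : i ∈ t <;> simp [ofSet, hs, ht]

end PEquiv

namespace HilbertBasis

variable {ι 𝕜 H : Type*} [RCLike 𝕜] [NormedAddCommGroup H] [InnerProductSpace 𝕜 H]
  (b : HilbertBasis ι 𝕜 H)

/-- `PEquiv.lpPullback σ` in the coordinates of `b`: it maps `b j` to `b i` if `σ i = some j`,
and to `0` if `j` is not in the range of `σ`. -/
noncomputable def pequivOp (σ : ι ≃. ι) : H →L[𝕜] H :=
  b.repr.symm.toContinuousLinearEquiv.conjContinuousAlgEquiv (σ.lpPullback 𝕜 𝕜)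

theorem pequivOp_trans (σ τ : ι ≃. ι) : b.pequivOp (σ.trans τ) = b.pequivOp σ * b.pequivOp τ := by
  rw [pequivOp, PEquiv.lpPullback_trans, map_mul]; rfl

theorem pequivOp_refl : b.pequivOp (PEquiv.refl ι) = 1 := by
  rw [pequivOp, PEquiv.lpPullback_refl, map_one]

theorem pequivOp_bot : b.pequivOp ⊥ = 0 := by
  rw [pequivOp, PEquiv.lpPullback_bot, map_zero]

theorem pequivOp_ofSet_add_of_disjoint {s t : Set ι} [DecidablePred (· ∈ s)]
    [DecidablePred (· ∈ t)] [DecidablePred (· ∈ s ∪ t)] (hst : Disjoint s t) :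
    b.pequivOp (.ofSet s) + b.pequivOp (.ofSet t) = b.pequivOp (.ofSet (s ∪ t)) := by
  rw [pequivOp, pequivOp, pequivOp, ← map_add, PEquiv.lpPullback_ofSet_add_of_disjoint hst]

theorem norm_pequivOp_le (σ : ι ≃. ι) : ‖b.pequivOp σ‖ ≤ 1 := by
  refine ContinuousLinearMap.opNorm_le_bound _ zero_le_one fun x ↦ ?_
  change ‖b.repr.symm (σ.lpPullback 𝕜 𝕜 (b.repr x))‖ ≤ 1 * ‖x‖
  rw [LinearIsometryEquiv.norm_map, ← b.repr.norm_map x]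
  exact (σ.lpPullback 𝕜 𝕜).le_of_opNorm_le σ.norm_lpPullback_le _

variable {κ : Type*}

noncomputable def pequivSeq (σ : κ → ι ≃. ι) : lp (fun _ : κ ↦ H →L[𝕜] H) ∞ :=
  ⟨fun m ↦ b.pequivOp (σ m), memℓp_infty ⟨1, by rintro _ ⟨m, rfl⟩; exact b.norm_pequivOp_le _⟩⟩

theorem pequivSeq_apply (σ : κ → ι ≃. ι) (m : κ) : b.pequivSeq σ m = b.pequivOp (σ m) := rfl

theorem pequivSeq_mul (σ τ : κ → ι ≃. ι) :
    b.pequivSeq σ * b.pequivSeq τ = b.pequivSeq fun m ↦ (σ m).trans (τ m) := by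
  refine lp.ext <| funext fun m ↦ ?_
  rw [lp.infty_coeFn_mul, Pi.mul_apply, pequivSeq_apply, pequivSeq_apply, pequivSeq_apply,
    pequivOp_trans]

theorem pequivSeq_bot : b.pequivSeq (fun _ : κ ↦ ⊥) = 0 :=
  lp.ext <| funext fun _ ↦ b.pequivOp_bot

theorem pequivSeq_refl [Nontrivial H] : b.pequivSeq (fun _ : κ ↦ PEquiv.refl ι) = 1 :=
  lp.ext <| funext fun _ ↦ b.pequivOp_refl

theorem pequivSeq_ofSet_add_of_disjoint {s t : Set ι} [DecidablePred (· ∈ s)]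
    [DecidablePred (· ∈ t)] [DecidablePred (· ∈ s ∪ t)] (hst : Disjoint s t) :
    b.pequivSeq (fun _ : κ ↦ .ofSet s) + b.pequivSeq (fun _ ↦ .ofSet t) =
      b.pequivSeq fun _ ↦ .ofSet (s ∪ t) :=
  lp.ext <| funext fun _ ↦ b.pequivOp_ofSet_add_of_disjoint hst

theorem isIdempotentElem_pequivSeq {σ : κ → ι ≃. ι} (hσ : ∀ m, (σ m).trans (σ m) = σ m) :
    IsIdempotentElem (b.pequivSeq σ) := by
  rw [IsIdempotentElem, pequivSeq_mul]
  simp only [hσ]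

theorem pequivSeq_single_mul_single_apply_of_ne [DecidableEq ι] {a c : κ → ι} {m : κ}
    (h : a m ≠ c m) :
    (b.pequivSeq (fun m ↦ .single (a m) (a m)) * b.pequivSeq fun m ↦ .single (c m) (c m)) m =
      0 := by
  rw [pequivSeq_mul, pequivSeq_apply, PEquiv.single_trans_single_of_ne h, pequivOp_bot]

end HilbertBasis

section JordanMapOnPequivSeq

open PEquiv

variable {ι κ 𝕜 H B F : Type*} [RCLike 𝕜] [NormedAddCommGroup H] [InnerProductSpace 𝕜 H]
  (b : HilbertBasis ι 𝕜 H) [NonUnitalRing B] [FunLike F (lp (fun _ : κ ↦ H →L[𝕜] H) ∞) B]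
  [AddMonoidHomClass F (lp (fun _ : κ ↦ H →L[𝕜] H) ∞) B] {Φ : F}

theorem map_pequivSeq_trans_symm_eq_zero [IsAddTorsionFree B] (hΦ : ∀ x, Φ (x * x) = Φ x * Φ x)
    (σ : κ → ι ≃. ι) (hσ : ∀ m, (σ m).trans (σ m) = ⊥)
    (h : Φ (b.pequivSeq fun m ↦ (σ m).symm.trans (σ m)) = 0) :
    Φ (b.pequivSeq fun m ↦ (σ m).trans (σ m).symm) = 0 := by
  rw [← b.pequivSeq_mul] at h ⊢
  refine map_mul_eq_zero_of_partialIso (A := lp (fun _ : κ ↦ H →L[𝕜] H) ∞) hΦ ?_ ?_ ?_ h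
  · simp only [b.pequivSeq_mul, trans_symm_trans]
  · simp only [b.pequivSeq_mul, hσ, b.pequivSeq_bot]
  · simp only [b.pequivSeq_mul, ← symm_trans_rev, hσ, symm_bot, b.pequivSeq_bot]

theorem map_pequivSeq_single_eq_zero_of_ne [IsAddTorsionFree B] [DecidableEq ι]
    (hΦ : ∀ x, Φ (x * x) = Φ x * Φ x) {a c : κ → ι} (hac : ∀ m, a m ≠ c m)
    (h : Φ (b.pequivSeq fun m ↦ single (c m) (c m)) = 0) :
    Φ (b.pequivSeq fun m ↦ single (a m) (a m)) = 0 := by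
  have := map_pequivSeq_trans_symm_eq_zero b hΦ (fun m ↦ single (a m) (c m))
    (fun m ↦ single_trans_single_of_ne (hac m).symm _ _)
  simp only [symm_single, single_trans_single] at this
  exact this h

theorem map_pequivSeq_single_eq_zero [IsAddTorsionFree B] [DecidableEq ι] [Infinite ι]
    (hΦ : ∀ x, Φ (x * x) = Φ x * Φ x) (a c : κ → ι)
    (h : Φ (b.pequivSeq fun m ↦ single (c m) (c m)) = 0) :
    Φ (b.pequivSeq fun m ↦ single (a m) (a m)) = 0 := by
  choose d hd using fun m ↦ Infinite.exists_notMem_finset {a m, c m}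
  simp only [Finset.mem_insert, Finset.mem_singleton, not_or] at hd
  refine map_pequivSeq_single_eq_zero_of_ne b hΦ (fun m ↦ Ne.symm (hd m).1) ?_
  exact map_pequivSeq_single_eq_zero_of_ne b hΦ (fun m ↦ (hd m).2) h

theorem map_pequivSeq_ofSet_ne_zero [IsAddTorsionFree B] [Nontrivial H] [Countable ι]
    (hΦ : ∀ x, Φ (x * x) = Φ x * Φ x) (h1 : Φ 1 ≠ 0) {s : Set ι} [DecidablePred (· ∈ s)]
    (hs : s.Infinite) (hsc : sᶜ.Infinite) : Φ (b.pequivSeq fun _ ↦ ofSet s) ≠ 0 := by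
  have := hs.to_subtype
  have := hsc.to_subtype
  obtain ⟨e⟩ := nonempty_equiv_of_countable (α := s) (β := (sᶜ : Set ι))
  intro hs
  have hsc := map_pequivSeq_trans_symm_eq_zero b hΦ (fun _ ↦ ofSubtypeEquiv e.symm)
    (fun _ ↦ ofSubtypeEquiv_trans_self _ disjoint_compl_left)
  rw [symm_trans_ofSubtypeEquiv, ofSubtypeEquiv_trans_symm] at hsc
  apply h1
  rw [← b.pequivSeq_refl, ← ofSet_eq_refl.2 (Set.union_compl_self s),
    ← b.pequivSeq_ofSet_add_of_disjoint disjoint_compl_right, map_add, hs, hsc hs, add_zero]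

theorem map_pequivSeq_ofSet_eq_zero_of_finite [DecidableEq ι]
    (h : ∀ i, Φ (b.pequivSeq fun _ : κ ↦ single i i) = 0) {s : Set ι} (hs : s.Finite)
    [DecidablePred (· ∈ s)] : Φ (b.pequivSeq fun _ ↦ ofSet s) = 0 := by
  classical
  suffices ∀ t : Set ι, t.Finite → Φ (b.pequivSeq fun _ ↦ ofSet t) = 0 by convert this s hs
  intro t ht
  induction t, ht using Set.Finite.induction_on with
  | empty =>
    convert map_zero Φ
    convert b.pequivSeq_bot (κ := κ)
    exact PEquiv.ext fun _ ↦ if_neg (Set.notMem_empty _)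
  | @insert i t hi _ ih =>
    have : Φ (b.pequivSeq (fun _ ↦ single i i) + b.pequivSeq fun _ ↦ ofSet t) = 0 := by
      rw [map_add, h, ih, add_zero]
    convert this using 2
    rw [single_self_eq_ofSet,
      b.pequivSeq_ofSet_add_of_disjoint (Set.disjoint_singleton_left.2 hi)]
    congr! 3

end JordanMapOnPequivSeq

/-- Let `H` be a complex separable infinite-dimensional Hilbert space.
There is no nonzero Jordan homomorphism `Φ : ℓ∞(ℕ, B(H)) → B(H)` (i.e. complex-linear map
with `Φ(x²) = Φ(x)²`) which vanishes on the set of all cofinite sequences (sequences all but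
finitely many of whose coordinates are zero). -/
theorem no_nonzero_jordan_hom_vanishing_on_cofinite
    {H : Type*} [NormedAddCommGroup H] [InnerProductSpace ℂ H] [CompleteSpace H]
    [TopologicalSpace.SeparableSpace H] [Nontrivial H]
    (hinf : ¬ FiniteDimensional ℂ H) :
    ¬ ∃ Φ : lp (fun _ : ℕ => H →L[ℂ] H) ∞ →ₗ[ℂ] (H →L[ℂ] H),
        (∀ x, Φ (x * x) = Φ x * Φ x) ∧ Φ ≠ 0 ∧
        ∀ x : lp (fun _ : ℕ => H →L[ℂ] H) ∞,
          {n : ℕ | (x : ∀ _ : ℕ, H →L[ℂ] H) n ≠ 0}.Finite → Φ x = 0 := by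
  rintro ⟨Φ, hΦ, hΦ0, hcofin⟩
  classical
  have : IsAddTorsionFree (H →L[ℂ] H) := .of_isTorsionFree ℂ _
  obtain ⟨b⟩ := exists_hilbertBasis_of_countable_of_infinite hinf (List Bool)
  have h1 : Φ 1 ≠ 0 := fun h1 ↦ hΦ0 <| LinearMap.ext <| map_eq_zero_of_map_one_eq_zero hΦ h1
  apply not_countable_nat_to_bool
  by_cases hdiag : ∀ a : ℕ → List Bool, Φ (b.pequivSeq fun m ↦ .single (a m) (a m)) = 0
  · refine countable_of_map_isIdempotentElem hΦ (fun x ↦ b.pequivSeq fun _ ↦ .ofSet (branch x))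
      (fun _ ↦ b.isIdempotentElem_pequivSeq fun _ ↦ PEquiv.ofSet_trans_ofSet_self _)
      (fun x ↦ map_pequivSeq_ofSet_ne_zero b hΦ h1 (infinite_branch x) (infinite_compl_branch x))
      fun x y hxy ↦ ?_
    simp only [b.pequivSeq_mul, PEquiv.ofSet_trans_ofSet]
    exact map_pequivSeq_ofSet_eq_zero_of_finite b (fun i ↦ hdiag fun _ ↦ i)
      (finite_branch_inter hxy)
  · obtain ⟨a, ha⟩ := not_forall.1 hdiag
    refine countable_of_map_isIdempotentElem hΦ
      (fun x ↦ b.pequivSeq fun m ↦ .single (prefixList x m) (prefixList x m))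
      (fun _ ↦ b.isIdempotentElem_pequivSeq fun _ ↦ PEquiv.single_trans_single _ _ _)
      (fun x h ↦ ha (map_pequivSeq_single_eq_zero b hΦ a _ h)) fun x y hxy ↦ hcofin _ ?_
    exact (finite_setOf_prefixList_eq hxy).subset fun m hm ↦
      by_contra fun hne ↦ hm (b.pequivSeq_single_mul_single_apply_of_ne hne)
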